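/- Let Λ(y1,y2) = log((cosh y1 + cosh y2)/2) and let I be its Legendre transform. Then for every x ∈ R^2 \ {0} and λ > 0, inf_{γ > 0} (λγ + γ·I(x/γ)) = max{ x·y : y ∈ R^2, Λ(y) = λ }. -/

import Mathlib

open scoped ENNReal

/-- The log-Laplace transform of a step of the simple random walk on ℤ². -/
noncomputable def lmgf (y : ℝ × ℝ) : ℝ := Real.log ((Real.cosh y.1 + Real.cosh y.2) / 2)

/-- The Cramér rate function (Legendre transform of `lmgf`), valued in `[0,∞]`. -/
noncomputable def cramerI (z : ℝ × ℝ) : ℝ≥0∞ :=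
  ⨆ y : ℝ × ℝ, ENNReal.ofReal (z.1 * y.1 + z.2 * y.2 - lmgf y)

/-!
Since `∇Λ(y) = (sinh y₁, sinh y₂) / (cosh y₁ + cosh y₂)`, along the curve
`t ↦ (arsinh (t x₁), arsinh (t x₂))` the gradient `∇Λ` is a positive multiple of `x`; by the
intermediate value theorem the curve meets the level set `{Λ = λ}` at some `y₀`, where
`x = γ₀ ∇Λ(y₀)` with `γ₀ > 0`. Convexity of `Λ` then gives `x · y ≤ x · y₀ + γ₀ (Λ(y) - λ)`
for all `y`. On the level set this says that `y₀` is the maximizer; since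
`γ I(x/γ) = sup_y (x · y - γ Λ(y))`, it also says that `γ₀` brings `λγ + γ I(x/γ)` down to
`x · y₀`, while evaluating the supremum at `y₀` shows that no `γ` does better.
-/

open Real

lemma cosh_mul_exp_tanh_mul_le (a d : ℝ) : cosh a * exp (tanh a * d) ≤ cosh (a + d) := by
  have hsinh : sinh a = cosh a * tanh a := by
    rw [tanh_eq_sinh_div_cosh, mul_div_cancel₀ _ (cosh_pos a).ne']
  calc cosh a * exp (tanh a * d) ≤ cosh a * (cosh d + tanh a * sinh d) :=
        mul_le_mul_of_nonneg_left
          (exp_mul_le_cosh_add_mul_sinh (abs_tanh_lt_one a).le d) (cosh_pos a).le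
    _ = cosh (a + d) := by rw [cosh_add, hsinh]; ring

/-- The gradient inequality for the convex function `lmgf`, whose gradient at `(a, b)` is
`(sinh a, sinh b) / (cosh a + cosh b)`. -/
lemma sinh_mul_sub_add_sinh_mul_sub_le (a b u v : ℝ) :
    sinh a * (u - a) + sinh b * (v - b) ≤ (cosh a + cosh b) * (lmgf (u, v) - lmgf (a, b)) := by
  have hca := cosh_pos a
  have hcb := cosh_pos b
  set S := cosh a + cosh b
  have hS : 0 < S := by positivity
  set Q := (sinh a * (u - a) + sinh b * (v - b)) / S
  -- Jensen for `exp` with weights `cosh a / S`, `cosh b / S`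
  have hjensen := convexOn_exp.2 (Set.mem_univ (tanh a * (u - a)))
    (Set.mem_univ (tanh b * (v - b))) (by positivity : 0 ≤ cosh a / S)
    (by positivity : 0 ≤ cosh b / S) (by rw [← add_div, div_self hS.ne'])
  simp only [smul_eq_mul] at hjensen
  have hQ : cosh a / S * (tanh a * (u - a)) + cosh b / S * (tanh b * (v - b)) = Q := by
    simp only [Q, tanh_eq_sinh_div_cosh]
    field_simp
  rw [hQ] at hjensen
  have hexp : exp Q * S ≤ cosh u + cosh v := by
    have h₁ := cosh_mul_exp_tanh_mul_le a (u - a)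
    have h₂ := cosh_mul_exp_tanh_mul_le b (v - b)
    rw [add_sub_cancel] at h₁ h₂
    calc exp Q * S
        ≤ (cosh a / S * exp (tanh a * (u - a)) + cosh b / S * exp (tanh b * (v - b))) * S :=
          mul_le_mul_of_nonneg_right hjensen hS.le
      _ = cosh a * exp (tanh a * (u - a)) + cosh b * exp (tanh b * (v - b)) := by field_simp
      _ ≤ cosh u + cosh v := add_le_add h₁ h₂
  have hlog : Q + lmgf (a, b) ≤ lmgf (u, v) := by
    have := log_le_log (by positivity) (div_le_div_of_nonneg_right hexp zero_le_two)
    rwa [mul_div_assoc, log_mul (exp_pos Q).ne' (by positivity), log_exp] at this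
  rw [← div_mul_cancel₀ (sinh a * (u - a) + sinh b * (v - b)) hS.ne', mul_comm]
  exact mul_le_mul_of_nonneg_left (by linarith) hS.le

lemma lmgf_zero : lmgf 0 = 0 := by simp [lmgf]

lemma continuous_lmgf : Continuous lmgf :=
  Continuous.log (by fun_prop) fun y =>
    (div_pos (add_pos (cosh_pos y.1) (cosh_pos y.2)) two_pos).ne'

lemma ofReal_mul_cramerI_inv_smul (x : ℝ × ℝ) {γ : ℝ} (hγ : 0 < γ) :
    ENNReal.ofReal γ * cramerI (γ⁻¹ • x) =
      ⨆ y : ℝ × ℝ, ENNReal.ofReal (x.1 * y.1 + x.2 * y.2 - γ * lmgf y) := by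
  rw [cramerI, ENNReal.mul_iSup]
  refine iSup_congr fun y => ?_
  rw [← ENNReal.ofReal_mul hγ.le]
  congr 1
  simp only [Prod.smul_fst, Prod.smul_snd, smul_eq_mul]
  field_simp

/-- `hsupp` says that `y₀` maximizes the Lagrangian `y ↦ x · y - γ₀ (lmgf y - lam)`, i.e. that
`γ₀` is a Lagrange multiplier for maximizing `x · y` on `{lmgf = lam}`. -/
lemma inf_conv_eq_of_lagrange_multiplier {x y₀ : ℝ × ℝ} {lam γ₀ : ℝ} (hlam : 0 ≤ lam) (hγ₀ : 0 < γ₀)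
    (hy₀ : lmgf y₀ = lam)
    (hsupp : ∀ y, x.1 * y.1 + x.2 * y.2 ≤ x.1 * y₀.1 + x.2 * y₀.2 + γ₀ * (lmgf y - lam)) :
    IsGreatest {v : ℝ | ∃ y : ℝ × ℝ, lmgf y = lam ∧ v = x.1 * y.1 + x.2 * y.2}
        (x.1 * y₀.1 + x.2 * y₀.2) ∧
      (⨅ γ ∈ Set.Ioi (0 : ℝ),
          (ENNReal.ofReal (lam * γ) + ENNReal.ofReal γ * cramerI (γ⁻¹ • x)))
        = ENNReal.ofReal (x.1 * y₀.1 + x.2 * y₀.2) := by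
  set M := x.1 * y₀.1 + x.2 * y₀.2
  have hM : lam * γ₀ ≤ M := by
    have := hsupp 0
    rw [lmgf_zero] at this
    simp only [Prod.fst_zero, Prod.snd_zero, mul_zero, add_zero] at this
    linarith
  refine ⟨⟨⟨y₀, hy₀, rfl⟩, ?_⟩, le_antisymm ?_ ?_⟩
  · rintro v ⟨y, hy, rfl⟩
    simpa [hy] using hsupp y
  · refine (iInf₂_le γ₀ hγ₀).trans ?_
    rw [ofReal_mul_cramerI_inv_smul x hγ₀]
    calc ENNReal.ofReal (lam * γ₀) +
          ⨆ y : ℝ × ℝ, ENNReal.ofReal (x.1 * y.1 + x.2 * y.2 - γ₀ * lmgf y)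
        ≤ ENNReal.ofReal (lam * γ₀) + ENNReal.ofReal (M - lam * γ₀) := by
          gcongr
          refine iSup_le fun y => ENNReal.ofReal_le_ofReal ?_
          linarith [hsupp y]
      _ = ENNReal.ofReal M := by
          rw [← ENNReal.ofReal_add (by positivity) (by linarith), add_sub_cancel]
  · refine le_iInf₂ fun γ hγ => ?_
    rw [ofReal_mul_cramerI_inv_smul x hγ]
    calc ENNReal.ofReal M = ENNReal.ofReal (lam * γ + (M - γ * lmgf y₀)) := by
          rw [hy₀, mul_comm γ, add_sub_cancel]
      _ ≤ ENNReal.ofReal (lam * γ) + ENNReal.ofReal (M - γ * lmgf y₀) := ENNReal.ofReal_add_le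
      _ ≤ _ := by
          gcongr
          exact le_iSup (fun y : ℝ × ℝ => ENNReal.ofReal (x.1 * y.1 + x.2 * y.2 - γ * lmgf y)) y₀

lemma exists_pos_lmgf_arsinh_eq {x : ℝ × ℝ} (hx : x ≠ 0) {lam : ℝ} (hlam : 0 < lam) :
    ∃ t > 0, lmgf (arsinh (t * x.1), arsinh (t * x.2)) = lam := by
  set g : ℝ → ℝ := fun t => lmgf (arsinh (t * x.1), arsinh (t * x.2))
  have hg : Continuous g :=
    continuous_lmgf.comp <| (continuous_arsinh.comp (by fun_prop)).prodMk
      (continuous_arsinh.comp (by fun_prop))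
  have hx' : 0 < |x.1| + |x.2| := (norm_pos_iff.mpr hx).trans_le <| by
    rw [Prod.norm_def]
    exact max_le_add_of_nonneg (norm_nonneg _) (norm_nonneg _)
  set T := 2 * exp lam / (|x.1| + |x.2|)
  have hT : 0 < T := by positivity
  have habs (z : ℝ) : |z| ≤ cosh (arsinh z) := by
    rw [cosh_arsinh, ← sqrt_sq_eq_abs]
    exact sqrt_le_sqrt (by linarith)
  have hgT : lam ≤ g T := by
    have h₁ := habs (T * x.1)
    have h₂ := habs (T * x.2)
    rw [abs_mul, abs_of_pos hT] at h₁ h₂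
    have : T * (|x.1| + |x.2|) = 2 * exp lam := div_mul_cancel₀ _ hx'.ne'
    show lam ≤ log _
    rw [le_log_iff_exp_le (by positivity)]
    linarith
  have hg0 : g 0 = 0 := by simp [g, lmgf]
  obtain ⟨t, ht, hgt⟩ := intermediate_value_Icc hT.le hg.continuousOn
    (show lam ∈ Set.Icc (g 0) (g T) from ⟨hg0.trans_le hlam.le, hgT⟩)
  refine ⟨t, ht.1.lt_of_ne ?_, hgt⟩
  rintro rfl
  exact hlam.ne' (hg0 ▸ hgt).symm

/-- The inf-convolution form of the surface tension equals the constrained linear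
maximization over the level set of `Λ`:
`inf_{γ>0} (λγ + γ I(x/γ)) = max{ x·y : Λ(y) = λ }`. -/
theorem inf_conv_eq_max_level (x : ℝ × ℝ) (hx : x ≠ 0) (lam : ℝ) (hlam : 0 < lam) :
    ∃ M : ℝ,
      IsGreatest {v : ℝ | ∃ y : ℝ × ℝ, lmgf y = lam ∧ v = x.1 * y.1 + x.2 * y.2} M ∧
      (⨅ γ ∈ Set.Ioi (0 : ℝ),
          (ENNReal.ofReal (lam * γ) + ENNReal.ofReal γ * cramerI (γ⁻¹ • x)))
        = ENNReal.ofReal M := by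
  obtain ⟨t, ht, hlevel⟩ := exists_pos_lmgf_arsinh_eq hx hlam
  set a := arsinh (t * x.1)
  set b := arsinh (t * x.2)
  have hS : 0 < cosh a + cosh b := add_pos (cosh_pos a) (cosh_pos b)
  -- `∇lmgf (a, b) = (t / (cosh a + cosh b)) • x`, whence the multiplier `(cosh a + cosh b) / t`
  refine ⟨_, inf_conv_eq_of_lagrange_multiplier hlam.le (div_pos hS ht) hlevel fun y => ?_⟩
  have h := sinh_mul_sub_add_sinh_mul_sub_le a b y.1 y.2
  rw [sinh_arsinh, sinh_arsinh, hlevel] at h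
  rw [div_mul_eq_mul_div, ← sub_le_iff_le_add', le_div_iff₀ ht]
  linarith
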